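/- arXiv:1812.11062 — 2 statements merged into one kernel-verified Lean document; each statement's English description precedes it below -/
import Mathlib

section
/- Let Φ : ℝ → ℝ be convex, assume s ↦ exp(−Φ(s)) is integrable on (z, ∞) for every z ∈ ℝ, and let c ∈ ℝ^n and τ ∈ ℝ. Then the function x ↦ −log( ∫_{(τ − ⟨c, x⟩, ∞)} exp(−Φ(s)) ds ) is convex on ℝ^n. -/
/-!
Write `G t = ∫_{(t, ∞)} exp (-Φ)`. Then `(-log G)' (t) = exp (-Φ t) / G t`, and this ratio is
nondecreasing: after the substitution `u ↦ u + (t - s)` the inequality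
`exp (-Φ s) G t ≤ exp (-Φ t) G s` for `s ≤ t` holds pointwise under the integral, because the
increments `Φ (u + d) - Φ u` of a convex function are nondecreasing in `u`. Hence `-log G` is
convex on `ℝ`, and so is its composition with the affine map `x ↦ τ - ⟨c, x⟩`.
-/

open MeasureTheory Set

theorem ConvexOn.map_add_sub_map_le {D : Set ℝ} {f : ℝ → ℝ} (hf : ConvexOn ℝ D f)
    {s u d : ℝ} (hs : s ∈ D) (hud : u + d ∈ D) (hsu : s ≤ u) (hd : 0 ≤ d) :
    f (s + d) - f s ≤ f (u + d) - f u := by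
  rcases hd.eq_or_lt with rfl | hd
  · simp
  rcases hsu.eq_or_lt with rfl | hsu
  · rfl
  have hsd := hf.secant_mono_aux1 hs hud (y := s + d) (by linarith) (by linarith)
  have hu := hf.secant_mono_aux1 hs hud (y := u) hsu (by linarith)
  refine le_of_mul_le_mul_left ?_ (by linarith : 0 < u + d - s)
  linear_combination hsd + hu

theorem setIntegral_Ioi_comp_add_right {E : Type*} [NormedAddCommGroup E] [NormedSpace ℝ E]
    (g : ℝ → E) (z d : ℝ) : ∫ u in Ioi (z - d), g (u + d) = ∫ u in Ioi z, g u := by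
  rw [← preimage_add_const_Ioi]
  exact (measurePreserving_add_right volume d).setIntegral_preimage_emb
    (measurableEmbedding_addRight d) g _

theorem integrableOn_Ioi_comp_add_right_iff {E : Type*} [NormedAddCommGroup E]
    {g : ℝ → E} (z d : ℝ) :
    IntegrableOn (fun u => g (u + d)) (Ioi (z - d)) ↔ IntegrableOn g (Ioi z) := by
  rw [← preimage_add_const_Ioi]
  exact (measurePreserving_add_right volume d).integrableOn_comp_preimage
    (measurableEmbedding_addRight d)

theorem hasDerivAt_integral_Ioi {g : ℝ → ℝ} {a t : ℝ} (hg : Continuous g)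
    (hint : IntegrableOn g (Ioi a)) (hat : a < t) :
    HasDerivAt (fun t => ∫ s in Ioi t, g s) (-g t) t := by
  have hprim : HasDerivAt (fun u => ∫ s in a..u, g s) (g t) t :=
    intervalIntegral.integral_hasDerivAt_right (hg.intervalIntegrable _ _)
      hg.stronglyMeasurable.stronglyMeasurableAtFilter hg.continuousAt
  refine (hprim.const_sub (∫ s in Ioi a, g s)).congr_of_eventuallyEq ?_
  filter_upwards [Ioi_mem_nhds hat] with u hu
  rw [← intervalIntegral.integral_Ioi_sub_Ioi hint hu.le, sub_sub_cancel]

theorem integral_Ioi_exp_pos {f : ℝ → ℝ} {t : ℝ}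
    (hf : IntegrableOn (fun s => Real.exp (f s)) (Ioi t)) : 0 < ∫ s in Ioi t, Real.exp (f s) :=
  have : NeZero (volume.restrict (Ioi t)) := ⟨by simp⟩
  integral_exp_pos hf

theorem exp_neg_mul_integral_Ioi_le {Φ : ℝ → ℝ} (hΦ : ConvexOn ℝ univ Φ) {s t : ℝ}
    (hint : IntegrableOn (fun u => Real.exp (-Φ u)) (Ioi s)) (hst : s ≤ t) :
    Real.exp (-Φ s) * ∫ u in Ioi t, Real.exp (-Φ u) ≤
      Real.exp (-Φ t) * ∫ u in Ioi s, Real.exp (-Φ u) := by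
  obtain ⟨d, hd, rfl⟩ : ∃ d, 0 ≤ d ∧ t = s + d := ⟨t - s, sub_nonneg.2 hst, by ring⟩
  have hshift := setIntegral_Ioi_comp_add_right (fun u => Real.exp (-Φ u)) (s + d) d
  have hshift_int := (integrableOn_Ioi_comp_add_right_iff (s + d) d).2
    (hint.mono_set (Ioi_subset_Ioi (le_add_of_nonneg_right hd)))
  rw [add_sub_cancel_right] at hshift hshift_int
  rw [← hshift, ← integral_const_mul, ← integral_const_mul]
  refine setIntegral_mono_on (hshift_int.const_mul _) (hint.const_mul _) measurableSet_Ioi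
    fun u hu => ?_
  have := hΦ.map_add_sub_map_le (mem_univ s) (mem_univ (u + d)) (le_of_lt hu) hd
  rw [← Real.exp_add, ← Real.exp_add, Real.exp_le_exp]
  linarith

theorem convexOn_neg_log_integral_Ioi_exp_neg {Φ : ℝ → ℝ} (hΦ : ConvexOn ℝ univ Φ)
    (hint : ∀ z, IntegrableOn (fun s => Real.exp (-Φ s)) (Ioi z)) :
    ConvexOn ℝ univ fun t => -Real.log (∫ s in Ioi t, Real.exp (-Φ s)) := by
  have hcont : Continuous fun s => Real.exp (-Φ s) :=
    Real.continuous_exp.comp (continuousOn_univ.1 (hΦ.continuousOn isOpen_univ)).neg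
  have hderiv (t : ℝ) : HasDerivAt (fun t => -Real.log (∫ s in Ioi t, Real.exp (-Φ s)))
      (Real.exp (-Φ t) / ∫ s in Ioi t, Real.exp (-Φ s)) t := by
    have := ((hasDerivAt_integral_Ioi hcont (hint (t - 1)) (sub_one_lt t)).log
      (integral_Ioi_exp_pos (hint t)).ne').neg
    rwa [neg_div, neg_neg] at this
  refine Monotone.convexOn_univ_of_deriv (fun t => (hderiv t).differentiableAt) fun s t hst => ?_
  rw [(hderiv s).deriv, (hderiv t).deriv,
    div_le_div_iff₀ (integral_Ioi_exp_pos (hint s)) (integral_Ioi_exp_pos (hint t))]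
  exact exp_neg_mul_integral_Ioi_le hΦ (hint s) hst

/-- For convex `Φ` with `exp(−Φ)` integrable on every `(z, ∞)`,
`c ∈ ℝ^n` and `τ ∈ ℝ`, the map
`x ↦ −log(∫_{(τ − ⟨c,x⟩, ∞)} exp(−Φ(s)) ds)` is convex on ℝ^n. -/
theorem stmt_10 (n : ℕ) (Φ : ℝ → ℝ) (hΦ : ConvexOn ℝ Set.univ Φ)
    (hint : ∀ z : ℝ, IntegrableOn (fun s => Real.exp (-Φ s)) (Set.Ioi z))
    (c : Fin n → ℝ) (τ : ℝ) :
    ConvexOn ℝ Set.univ (fun x : Fin n → ℝ =>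
      -Real.log (∫ s in Set.Ioi (τ - ∑ k, c k * x k), Real.exp (-Φ s))) := by
  have h := (convexOn_neg_log_integral_Ioi_exp_neg hΦ hint).comp_affineMap
    (AffineMap.const ℝ (Fin n → ℝ) τ - (dotProductBilin ℝ ℝ c).toAffineMap)
  rwa [preimage_univ] at h
end

section
/- Let n, N, l be natural numbers. For each i ∈ {1,…,l} let f_i : ℝ → ℝ be measurable, log-concave, and integrable on (−∞, z) and on (z, ∞) for every z ∈ ℝ; let c_i ∈ ℝ^n and τ_i ∈ ℝ; and let y : {0,…,N} × {1,…,l} → {0,1} be given binary values. Let A ∈ ℝ^{n×n}, b : {0,…,N−1} → ℝ^n, x̄ ∈ ℝ^n, and let Ψ, G ∈ ℝ^{n×n} be positive semidefinite. Define on trajectories X = (x_0,…,x_N) ∈ (ℝ^n)^{N+1} the cost J(X) = ‖x_0 − x̄‖²_Ψ + Σ_{j=0}^{N−1} ‖x_{j+1} − A x_j − b_j‖²_G − Σ_{j=0}^{N} Σ_{i=1}^{l} [ (1 − y(j,i)) · log( ∫_{(−∞, τ_i − ⟨c_i, x_j⟩)} f_i(s) ds ) + y(j,i) · log( ∫_{(τ_i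 − ⟨c_i, x_j⟩, ∞)} f_i(s) ds ) ], and let S = { X ∈ (ℝ^n)^{N+1} : for all j, i, (y(j,i) = 0 implies ∫_{(−∞, τ_i − ⟨c_i, x_j⟩)} f_i(s) ds > 0) and (y(j,i) = 1 implies ∫_{(τ_i − ⟨c_i, x_j⟩, ∞)} f_i(s) ds > 0) }. Then S is convex and J is convex on S. -/
/-!
The quadratic terms are positive semidefinite forms of affine functions of the trajectory, hence
convex. Each measurement term is `log` of `z ↦ ∫ f` over `(-∞, z)` or `(z, ∞)`, evaluated at an
affine function of the trajectory; the point is that these tail integrals of a log-concave `f` are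
log-concave (a one-dimensional case of Prékopa's theorem). For `F z = ∫ x in Iio z, f x` this comes
from the midpoint inequality `F (m - d) * F (m + d) ≤ F m ^ 2`: subtracting `F (m - d) * F m` from
both sides, it says `∫∫ f a * f b ≤ ∫∫ f (a + d) * f (b - d)` over `a < m - d ≤ m ≤ b < m + d`,
which holds pointwise by log-concavity of `f`. Since `F` is continuous, midpoint concavity of
`log F` is concavity. The case `(z, ∞)` follows by reflecting `f`.
-/

open MeasureTheory Set Real Matrix

theorem nonneg_of_midpoint_concave {g : ℝ → ℝ} {a b : ℝ} (hg : ContinuousOn g (Icc a b))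
    (hmid : ∀ x ∈ Icc a b, ∀ y ∈ Icc a b, (g x + g y) / 2 ≤ g (midpoint ℝ x y))
    (ha : 0 ≤ g a) (hb : 0 ≤ g b) {t : ℝ} (ht : t ∈ Icc a b) : 0 ≤ g t := by
  by_contra! hneg
  obtain ⟨t₁, ht₁, hmin⟩ := isCompact_Icc.exists_isMinOn ⟨t, ht⟩ hg
  have hclosed : IsClosed (Icc a b ∩ g ⁻¹' Iic (g t₁)) :=
    hg.preimage_isClosed_of_isClosed isClosed_Icc isClosed_Iic
  -- the leftmost minimiser cannot be the midpoint of two points of `Icc a b`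
  obtain ⟨t₀, ⟨ht₀, hgt₀⟩, hleast⟩ :=
    (isCompact_Icc.of_isClosed_subset hclosed inter_subset_left).exists_isLeast
      ⟨t₁, ht₁, le_refl (g t₁)⟩
  have hgt₁ : g t₁ < 0 := (hmin ht).trans_lt hneg
  replace hgt₀ : g t₀ ≤ g t₁ := hgt₀
  have hat₀ : a < t₀ := ht₀.1.lt_of_ne fun h => by rw [← h] at hgt₀; linarith
  have ht₀b : t₀ < b := ht₀.2.lt_of_ne fun h => by rw [h] at hgt₀; linarith
  set δ := min (t₀ - a) (b - t₀)
  have hδ : 0 < δ := lt_min (by linarith) (by linarith)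
  have hleft : t₀ - δ ∈ Icc a b := ⟨by linarith [min_le_left (t₀ - a) (b - t₀)], by linarith⟩
  have hright : t₀ + δ ∈ Icc a b := ⟨by linarith, by linarith [min_le_right (t₀ - a) (b - t₀)]⟩
  have hgleft : g t₁ < g (t₀ - δ) :=
    not_le.1 fun h => (hleast ⟨hleft, h⟩).not_gt (by linarith)
  have := hmid _ hleft _ hright
  rw [midpoint_sub_add] at this
  linarith [show g t₁ ≤ g (t₀ + δ) from hmin hright]

theorem concaveOn_of_midpoint {E : Type*} [AddCommGroup E] [Module ℝ E] [TopologicalSpace E]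
    [IsTopologicalAddGroup E] [ContinuousSMul ℝ E] {s : Set E} {φ : E → ℝ}
    (hs : Convex ℝ s) (hφ : ContinuousOn φ s)
    (hmid : ∀ x ∈ s, ∀ y ∈ s, (φ x + φ y) / 2 ≤ φ (midpoint ℝ x y)) : ConcaveOn ℝ s φ := by
  refine ⟨hs, fun x hx y hy a b ha hb hab => ?_⟩
  have hmem : MapsTo (AffineMap.lineMap x y) (Icc (0 : ℝ) 1) s := fun t ht =>
    hs.lineMap_mem hx hy ht
  let g : ℝ → ℝ := fun t => φ (AffineMap.lineMap x y t) - AffineMap.lineMap (φ x) (φ y) t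
  have hg : ContinuousOn g (Icc 0 1) :=
    (hφ.comp (AffineMap.lineMap_continuous).continuousOn hmem).sub
      AffineMap.lineMap_continuous.continuousOn
  have hgmid : ∀ t ∈ Icc (0 : ℝ) 1, ∀ u ∈ Icc (0 : ℝ) 1, (g t + g u) / 2 ≤ g (midpoint ℝ t u) := by
    intro t ht u hu
    have := hmid _ (hmem ht) _ (hmem hu)
    simp only [g]
    rw [AffineMap.map_midpoint, AffineMap.map_midpoint,
      midpoint_eq_smul_add ℝ (AffineMap.lineMap (φ x) (φ y) t)]
    simp only [invOf_eq_inv, smul_eq_mul]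
    linarith
  have := nonneg_of_midpoint_concave hg hgmid (by simp [g]) (by simp [g]) ⟨hb, by linarith⟩
  obtain rfl : a = 1 - b := by linarith
  simpa [g, AffineMap.lineMap_apply_module, smul_eq_mul] using this

theorem integral_Iio_comp_add_right {E : Type*} [NormedAddCommGroup E] [NormedSpace ℝ E]
    (f : ℝ → E) (c d : ℝ) : ∫ x in Iio c, f (x + d) = ∫ x in Iio (c + d), f x := by
  simpa using (measurePreserving_add_right volume d).setIntegral_preimage_emb
    (measurableEmbedding_addRight d) f (Iio (c + d))

theorem MeasureTheory.IntegrableOn.comp_add_right_Iio {E : Type*} [NormedAddCommGroup E]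
    {f : ℝ → E} {c d : ℝ} (hf : IntegrableOn f (Iio (c + d))) :
    IntegrableOn (fun x => f (x + d)) (Iio c) := by
  have := ((measurePreserving_add_right volume d).integrableOn_comp_preimage
    (measurableEmbedding_addRight d)).2 hf
  rwa [preimage_add_const_Iio, add_sub_cancel_right] at this

theorem continuous_integral_Iio {E : Type*} [NormedAddCommGroup E] [NormedSpace ℝ E] {f : ℝ → E}
    (hf : ∀ z, IntegrableOn f (Iio z)) : Continuous fun z => ∫ x in Iio z, f x :=
  continuous_iff_continuousAt.2 fun z =>
    (hf (z + 1)).continuousOn_Iic_primitive_Iio.continuousAt (Iic_mem_nhds (by linarith))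

theorem monotone_integral_Iio {f : ℝ → ℝ} (h₀ : ∀ x, 0 ≤ f x) (hf : ∀ z, IntegrableOn f (Iio z)) :
    Monotone fun z => ∫ x in Iio z, f x := fun _ v huv =>
  setIntegral_mono_set (hf v) (ae_of_all _ h₀) (Iio_subset_Iio huv).eventuallyLE

structure IsLogConcave (f : ℝ → ℝ) : Prop where
  nonneg : ∀ x, 0 ≤ f x
  rpow_mul_rpow_le : ∀ x y t : ℝ, 0 ≤ t → t ≤ 1 →
    f x ^ (1 - t) * f y ^ t ≤ f ((1 - t) * x + t * y)

namespace IsLogConcave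

variable {f : ℝ → ℝ}

theorem comp_neg (hf : IsLogConcave f) : IsLogConcave fun x => f (-x) where
  nonneg x := hf.nonneg (-x)
  rpow_mul_rpow_le x y t ht₀ ht₁ := by
    simpa only [neg_add, mul_neg] using hf.rpow_mul_rpow_le (-x) (-y) t ht₀ ht₁

theorem mul_le_mul_of_add_eq (hf : IsLogConcave f) {s u v r : ℝ} (hsu : s ≤ u) (hur : u ≤ r)
    (huv : u + v = s + r) : f s * f r ≤ f u * f v := by
  rcases (hsu.trans hur).eq_or_lt with hsr | hsr
  · obtain rfl : u = s := by linarith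
    obtain rfl : v = r := by linarith
    rfl
  -- `u` and `v` are the convex combinations of `s` and `r` with swapped weights
  set t := (u - s) / (r - s)
  have ht₀ : 0 ≤ t := div_nonneg (by linarith) (by linarith)
  have ht₁ : t ≤ 1 := (div_le_one (by linarith)).2 (by linarith)
  have hrs : r - s ≠ 0 := by linarith
  have hu : (1 - t) * s + t * r = u := by simp only [t]; field_simp; ring
  have hv : (1 - t) * r + t * s = v := by
    simp only [t]; field_simp; linear_combination (s - r) * huv
  have hsplit : ∀ w : ℝ, 0 ≤ w → w ^ (1 - t) * w ^ t = w := fun w hw => by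
    rw [← rpow_add' hw (by norm_num), sub_add_cancel, rpow_one]
  calc f s * f r = (f s ^ (1 - t) * f s ^ t) * (f r ^ (1 - t) * f r ^ t) := by
        rw [hsplit _ (hf.nonneg s), hsplit _ (hf.nonneg r)]
    _ = f s ^ (1 - t) * f r ^ t * (f r ^ (1 - t) * f s ^ t) := by ring
    _ ≤ f u * f v := by
        rw [← hu, ← hv]
        exact mul_le_mul (hf.rpow_mul_rpow_le s r t ht₀ ht₁) (hf.rpow_mul_rpow_le r s t ht₀ ht₁)
          (mul_nonneg (rpow_nonneg (hf.nonneg r) _) (rpow_nonneg (hf.nonneg s) _)) (hf.nonneg _)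

section

variable (hf : IsLogConcave f) (hi : ∀ z, IntegrableOn f (Iio z))
include hf hi

theorem mul_intervalIntegral_le {a m d : ℝ} (hd : 0 ≤ d) (ham : a + d ≤ m) :
    f a * ∫ x in m..m + d, f x ≤ f (a + d) * ∫ x in m - d..m, f x := by
  have hII : ∀ p q, p ≤ q → IntervalIntegrable f volume p q := fun p q hpq =>
    (intervalIntegrable_iff_integrableOn_Ico_of_le hpq).2 ((hi q).mono_set Ico_subset_Iio_self)
  have hshift : IntervalIntegrable (fun x => f (x - d)) volume m (m + d) := by
    simpa using (hII (m - d) m (by linarith)).comp_sub_right d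
  have hsub : ∫ x in m - d..m, f x = ∫ x in m..m + d, f (x - d) := by
    simp [intervalIntegral.integral_comp_sub_right]
  rw [hsub, ← intervalIntegral.integral_const_mul, ← intervalIntegral.integral_const_mul]
  refine intervalIntegral.integral_mono_on (by linarith) ((hII _ _ (by linarith)).const_mul _)
    (hshift.const_mul _) fun x hx => ?_
  exact hf.mul_le_mul_of_add_eq (by linarith) (by linarith [hx.1]) (by ring)

theorem integral_Iio_mul_integral_Iio_le {m d : ℝ} (hd : 0 ≤ d) :
    (∫ x in Iio (m - d), f x) * (∫ x in Iio (m + d), f x) ≤ (∫ x in Iio m, f x) ^ 2 := by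
  have hright := intervalIntegral.integral_Iio_sub_Iio' (hi (m + d)) (hi m)
  have hleft := intervalIntegral.integral_Iio_sub_Iio' (hi m) (hi (m - d))
  have hcross : (∫ x in Iio (m - d), f x) * (∫ x in m..m + d, f x)
      ≤ (∫ x in Iio m, f x) * ∫ x in m - d..m, f x := by
    have hshift : ∫ x in Iio m, f x = ∫ x in Iio (m - d), f (x + d) := by
      rw [integral_Iio_comp_add_right, sub_add_cancel]
    rw [hshift, ← integral_mul_const, ← integral_mul_const]
    refine setIntegral_mono_on ((hi _).mul_const _) ?_ measurableSet_Iio fun a ha =>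
      hf.mul_intervalIntegral_le hi hd (by linarith [mem_Iio.1 ha])
    have : IntegrableOn (fun x => f (x + d)) (Iio (m - d)) :=
      IntegrableOn.comp_add_right_Iio (by simpa using hi m)
    exact this.mul_const _
  linear_combination hcross + (∫ x in Iio (m - d), f x) * hright - (∫ x in Iio m, f x) * hleft

theorem concaveOn_log_integral_Iio :
    ConcaveOn ℝ {z | 0 < ∫ x in Iio z, f x} fun z => log (∫ x in Iio z, f x) := by
  have hmono := monotone_integral_Iio hf.nonneg hi
  have hconvex : Convex ℝ {z | 0 < ∫ x in Iio z, f x} := by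
    simpa using (hmono.monotoneOn univ).convex_gt convex_univ 0
  refine concaveOn_of_midpoint hconvex
    ((continuous_integral_Iio hi).continuousOn.log fun z hz => hz.ne') fun p hp q hq => ?_
  wlog hpq : p ≤ q generalizing p q
  · rw [add_comm, midpoint_comm]
    exact this q hq p hp (le_of_not_ge hpq)
  have hm : midpoint ℝ p q = (p + q) / 2 := by
    rw [midpoint_eq_smul_add, invOf_eq_inv, smul_eq_mul]; ring
  have hsq := hf.integral_Iio_mul_integral_Iio_le hi (m := midpoint ℝ p q) (d := (q - p) / 2)
    (by linarith)
  rw [hm, show (p + q) / 2 - (q - p) / 2 = p by ring,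
    show (p + q) / 2 + (q - p) / 2 = q by ring] at hsq
  have hlog := log_le_log (mul_pos hp hq) hsq
  rw [log_mul hp.ne' hq.ne', log_pow, Nat.cast_ofNat] at hlog
  rw [hm]
  linarith

end

theorem concaveOn_log_integral_Ioi (hf : IsLogConcave f) (hi : ∀ z, IntegrableOn f (Ioi z)) :
    ConcaveOn ℝ {z | 0 < ∫ x in Ioi z, f x} fun z => log (∫ x in Ioi z, f x) := by
  have hreflect : ∀ z, ∫ x in Ioi z, f x = ∫ x in Iio (-z), f (-x) := fun z => by
    rw [← integral_Iic_eq_integral_Iio, integral_comp_neg_Iic, neg_neg]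
  have := (hf.comp_neg.concaveOn_log_integral_Iio fun z => (hi (-z)).comp_neg_Iio).comp_linearMap
    (-LinearMap.id)
  simpa [hreflect, Function.comp_def] using this

end IsLogConcave

section

variable {ι : Type*} [Fintype ι] {E : Type*} [AddCommGroup E] [Module ℝ E]

theorem Matrix.PosSemidef.convexOn_dotProduct_mulVec {M : Matrix ι ι ℝ} (hM : M.PosSemidef) :
    ConvexOn ℝ univ fun x : ι → ℝ => x ⬝ᵥ M *ᵥ x := by
  refine ⟨convex_univ, fun x _ y _ a b ha hb hab => ?_⟩
  have hxy : 0 ≤ (x - y) ⬝ᵥ M *ᵥ (x - y) := by simpa using hM.dotProduct_mulVec_nonneg (x - y)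
  obtain rfl : b = 1 - a := by linarith
  have key : a * (x ⬝ᵥ M *ᵥ x) + (1 - a) * (y ⬝ᵥ M *ᵥ y)
      - (a • x + (1 - a) • y) ⬝ᵥ M *ᵥ (a • x + (1 - a) • y)
      = a * (1 - a) * ((x - y) ⬝ᵥ M *ᵥ (x - y)) := by
    simp only [Matrix.mulVec_add, Matrix.mulVec_sub, Matrix.mulVec_smul, dotProduct_add,
      dotProduct_sub, add_dotProduct, sub_dotProduct, dotProduct_smul, smul_dotProduct, smul_eq_mul]
    ring
  simp only [smul_eq_mul]
  nlinarith [mul_nonneg (mul_nonneg ha hb) hxy]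

theorem ConvexOn.sum {κ : Type*} {s : Set E} {t : Finset κ} {g : κ → E → ℝ} (hs : Convex ℝ s)
    (hg : ∀ i ∈ t, ConvexOn ℝ s (g i)) : ConvexOn ℝ s fun x => ∑ i ∈ t, g i x := by
  simpa only [Finset.sum_fn] using
    Finset.sum_induction g (ConvexOn ℝ s) (fun _ _ => ConvexOn.add) (convexOn_const 0 hs) hg

theorem ConcaveOn.sum {κ : Type*} {s : Set E} {t : Finset κ} {g : κ → E → ℝ} (hs : Convex ℝ s)
    (hg : ∀ i ∈ t, ConcaveOn ℝ s (g i)) : ConcaveOn ℝ s fun x => ∑ i ∈ t, g i x := by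
  simpa only [Finset.sum_fn] using
    Finset.sum_induction g (ConcaveOn ℝ s) (fun _ _ => ConcaveOn.add) (concaveOn_const 0 hs) hg

theorem concaveOn_one_sub_mul_add_mul {y : ℝ} (hy : y = 0 ∨ y = 1) {s t : Set E} {g h : E → ℝ}
    (hg : ConcaveOn ℝ s g) (hh : ConcaveOn ℝ t h) :
    ConcaveOn ℝ {z | (y = 0 → z ∈ s) ∧ (y = 1 → z ∈ t)} fun z => (1 - y) * g z + y * h z := by
  rcases hy with rfl | rfl
  · simpa using hg
  · simpa using hh

variable {N : ℕ}

def stateResidual (A : Matrix ι ι ℝ) (b : Fin N → ι → ℝ) (j : Fin N) :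
    (Fin (N + 1) → ι → ℝ) →ᵃ[ℝ] (ι → ℝ) :=
  ((LinearMap.proj j.succ : (Fin (N + 1) → ι → ℝ) →ₗ[ℝ] ι → ℝ) -
    A.mulVecLin ∘ₗ LinearMap.proj j.castSucc).toAffineMap - AffineMap.const ℝ _ (b j)

def initialResidual (xbar : ι → ℝ) : (Fin (N + 1) → ι → ℝ) →ᵃ[ℝ] (ι → ℝ) :=
  (LinearMap.proj 0 : (Fin (N + 1) → ι → ℝ) →ₗ[ℝ] ι → ℝ).toAffineMap - AffineMap.const ℝ _ xbar

def measurementMargin (c : ι → ℝ) (τ : ℝ) (j : Fin (N + 1)) :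
    (Fin (N + 1) → ι → ℝ) →ᵃ[ℝ] ℝ :=
  AffineMap.const ℝ _ τ - (dotProductBilin ℝ ℝ c ∘ₗ LinearMap.proj j).toAffineMap

end

theorem stmt_12_general (n N l : ℕ)
    (f : Fin l → ℝ → ℝ)
    (hnonneg : ∀ i x, 0 ≤ f i x)
    (hlc : ∀ i, ∀ x y t : ℝ, 0 ≤ t → t ≤ 1 →
      f i x ^ (1 - t) * f i y ^ t ≤ f i ((1 - t) * x + t * y))
    (hint₁ : ∀ i, ∀ z : ℝ, IntegrableOn (f i) (Set.Iio z))
    (hint₂ : ∀ i, ∀ z : ℝ, IntegrableOn (f i) (Set.Ioi z))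
    (c : Fin l → Fin n → ℝ) (τ : Fin l → ℝ)
    (y : Fin (N + 1) → Fin l → ℝ)
    (hy : ∀ j i, y j i = 0 ∨ y j i = 1)
    (A : Matrix (Fin n) (Fin n) ℝ) (b : Fin N → Fin n → ℝ)
    (xbar : Fin n → ℝ) (Ψ G : Matrix (Fin n) (Fin n) ℝ)
    (hΨ : Ψ.PosSemidef) (hG : G.PosSemidef) :
    Convex ℝ {X : Fin (N + 1) → Fin n → ℝ | ∀ j i,
        (y j i = 0 → 0 < ∫ s in Set.Iio (τ i - ∑ k, c i k * X j k), f i s) ∧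
        (y j i = 1 → 0 < ∫ s in Set.Ioi (τ i - ∑ k, c i k * X j k), f i s)} ∧
    ConvexOn ℝ {X : Fin (N + 1) → Fin n → ℝ | ∀ j i,
        (y j i = 0 → 0 < ∫ s in Set.Iio (τ i - ∑ k, c i k * X j k), f i s) ∧
        (y j i = 1 → 0 < ∫ s in Set.Ioi (τ i - ∑ k, c i k * X j k), f i s)}
      (fun X : Fin (N + 1) → Fin n → ℝ =>
        dotProduct (X 0 - xbar) (Ψ.mulVec (X 0 - xbar)) +
        (∑ j : Fin N, dotProduct
          (X j.succ - A.mulVec (X j.castSucc) - b j)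
          (G.mulVec (X j.succ - A.mulVec (X j.castSucc) - b j))) -
        ∑ j : Fin (N + 1), ∑ i : Fin l,
          ((1 - y j i) *
              Real.log (∫ s in Set.Iio (τ i - ∑ k, c i k * X j k), f i s) +
            y j i *
              Real.log (∫ s in Set.Ioi (τ i - ∑ k, c i k * X j k), f i s))) := by
  have hterm : ∀ j i, ConcaveOn ℝ
      {z | (y j i = 0 → 0 < ∫ s in Iio z, f i s) ∧ (y j i = 1 → 0 < ∫ s in Ioi z, f i s)}
      fun z => (1 - y j i) * log (∫ s in Iio z, f i s) + y j i * log (∫ s in Ioi z, f i s) :=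
    fun j i =>
      have hf : IsLogConcave (f i) := ⟨hnonneg i, hlc i⟩
      concaveOn_one_sub_mul_add_mul (hy j i) (hf.concaveOn_log_integral_Iio (hint₁ i))
        (hf.concaveOn_log_integral_Ioi (hint₂ i))
  have hS : Convex ℝ {X : Fin (N + 1) → Fin n → ℝ | ∀ j i,
      (y j i = 0 → 0 < ∫ s in Iio (τ i - ∑ k, c i k * X j k), f i s) ∧
      (y j i = 1 → 0 < ∫ s in Ioi (τ i - ∑ k, c i k * X j k), f i s)} := by
    simp only [ofPred_forall]
    exact convex_iInter fun j => convex_iInter fun i =>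
      (hterm j i).1.affine_preimage (measurementMargin (c i) (τ i) j)
  refine ⟨hS, ?_⟩
  have hinit := (hΨ.convexOn_dotProduct_mulVec.comp_affineMap (initialResidual xbar)).subset
    (subset_univ _) hS
  have hdyn := ConvexOn.sum (t := Finset.univ) hS fun j _ =>
    (hG.convexOn_dotProduct_mulVec.comp_affineMap (stateResidual A b j)).subset (subset_univ _) hS
  have hobs := ConcaveOn.sum (t := Finset.univ) hS fun j _ =>
    ConcaveOn.sum (t := Finset.univ) hS fun i _ =>
      ((hterm j i).comp_affineMap (measurementMargin (c i) (τ i) j)).subset (fun X hX => hX j i) hS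
  exact (hinit.add hdyn).sub hobs

/-- Proposition 1: with linear dynamics, positive semidefinite
weights and log-concave measurement-noise densities `f i`, the set `S` of
trajectories on which the logarithms are well defined is convex, and the
moving-horizon MAP cost `J` is convex on `S`. -/
theorem stmt_12 (n N l : ℕ)
    (f : Fin l → ℝ → ℝ)
    (hmeas : ∀ i, Measurable (f i))
    (hnonneg : ∀ i x, 0 ≤ f i x)
    (hlc : ∀ i, ∀ x y t : ℝ, 0 ≤ t → t ≤ 1 →
      f i x ^ (1 - t) * f i y ^ t ≤ f i ((1 - t) * x + t * y))
    (hint₁ : ∀ i, ∀ z : ℝ, IntegrableOn (f i) (Set.Iio z))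
    (hint₂ : ∀ i, ∀ z : ℝ, IntegrableOn (f i) (Set.Ioi z))
    (c : Fin l → Fin n → ℝ) (τ : Fin l → ℝ)
    (y : Fin (N + 1) → Fin l → ℝ)
    (hy : ∀ j i, y j i = 0 ∨ y j i = 1)
    (A : Matrix (Fin n) (Fin n) ℝ) (b : Fin N → Fin n → ℝ)
    (xbar : Fin n → ℝ) (Ψ G : Matrix (Fin n) (Fin n) ℝ)
    (hΨ : Ψ.PosSemidef) (hG : G.PosSemidef) :
    Convex ℝ {X : Fin (N + 1) → Fin n → ℝ | ∀ j i,
        (y j i = 0 → 0 < ∫ s in Set.Iio (τ i - ∑ k, c i k * X j k), f i s) ∧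
        (y j i = 1 → 0 < ∫ s in Set.Ioi (τ i - ∑ k, c i k * X j k), f i s)} ∧
    ConvexOn ℝ {X : Fin (N + 1) → Fin n → ℝ | ∀ j i,
        (y j i = 0 → 0 < ∫ s in Set.Iio (τ i - ∑ k, c i k * X j k), f i s) ∧
        (y j i = 1 → 0 < ∫ s in Set.Ioi (τ i - ∑ k, c i k * X j k), f i s)}
      (fun X : Fin (N + 1) → Fin n → ℝ =>
        dotProduct (X 0 - xbar) (Ψ.mulVec (X 0 - xbar)) +
        (∑ j : Fin N, dotProduct
          (X j.succ - A.mulVec (X j.castSucc) - b j)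
          (G.mulVec (X j.succ - A.mulVec (X j.castSucc) - b j))) -
        ∑ j : Fin (N + 1), ∑ i : Fin l,
          ((1 - y j i) *
              Real.log (∫ s in Set.Iio (τ i - ∑ k, c i k * X j k), f i s) +
            y j i *
              Real.log (∫ s in Set.Ioi (τ i - ∑ k, c i k * X j k), f i s))) :=
  stmt_12_general n N l f hnonneg hlc hint₁ hint₂ c τ y hy A b xbar Ψ G hΨ hG
end
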